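/- Let m ≥ 1, n ≥ 2 be integers, let V(P_n) = {v₁, …, vₙ} with vᵢ adjacent to vᵢ₊₁, and let D be a minimum dominating set of K_m ⊠ P_n. Then for every i with 1 < i ≤ n, |D ∩ (V(K_m) × {v₁, …, vᵢ})| ≥ ⌈(i−1)/3⌉, and for every j with 1 ≤ j < n, |D ∩ (V(K_m) × {v_j, …, vₙ})| ≥ ⌈(n−j)/3⌉. -/
import Mathlib


open SimpleGraph Finset

/-- `D` is a dominating set of `G`: every vertex is in `D` or adjacent to a vertex of `D`. -/
def SimpleGraph.IsDominatingSet {V : Type*} (G : SimpleGraph V) (D : Set V) : Prop :=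
  ∀ v : V, v ∈ D ∨ ∃ u ∈ D, G.Adj u v

/-- The domination number of a finite graph. -/
noncomputable def SimpleGraph.dominationNumber {V : Type*} [Fintype V]
    (G : SimpleGraph V) : ℕ :=
  sInf {k | ∃ D : Finset V, D.card = k ∧ G.IsDominatingSet ↑D}

/-- The bondage number of a finite graph: the least size of a set of edges whose removal
increases the domination number. -/
noncomputable def SimpleGraph.bondageNumber {V : Type*} [Fintype V]
    (G : SimpleGraph V) : ℕ :=
  sInf {k | ∃ Z : Finset (Sym2 V), Z.card = k ∧ (↑Z : Set (Sym2 V)) ⊆ G.edgeSet ∧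
    G.dominationNumber < (G.deleteEdges ↑Z).dominationNumber}

/-- The strong product of two simple graphs. -/
def SimpleGraph.strongProd {V W : Type*} (G : SimpleGraph V) (H : SimpleGraph W) :
    SimpleGraph (V × W) :=
  SimpleGraph.fromRel (fun a b =>
    (a.1 = b.1 ∧ H.Adj a.2 b.2) ∨ (G.Adj a.1 b.1 ∧ a.2 = b.2) ∨
      (G.Adj a.1 b.1 ∧ H.Adj a.2 b.2))

infixl:70 " ⊠ " => SimpleGraph.strongProd

lemma near_dominator {m n : ℕ} (hm : 1 ≤ m) (D : Finset (Fin m × Fin n))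
    (hdom : ((⊤ : SimpleGraph (Fin m)) ⊠ pathGraph n).IsDominatingSet ↑D)
    (c : ℕ) (hc : c < n) :
    ∃ d ∈ D, ((d.2 : ℕ) = c ∨ (d.2 : ℕ) + 1 = c ∨ c + 1 = (d.2 : ℕ)) := by
  have h0 : 0 < m := hm
  rcases hdom (⟨0, h0⟩, ⟨c, hc⟩) with h | ⟨u, hu, hadj⟩
  · exact ⟨_, h, Or.inl rfl⟩
  · refine ⟨u, hu, ?_⟩
    simp only [SimpleGraph.strongProd, SimpleGraph.fromRel_adj] at hadj
    obtain ⟨-, hrel⟩ := hadj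
    rcases hrel with (⟨-, h⟩ | ⟨-, h⟩ | ⟨-, h⟩) | (⟨-, h⟩ | ⟨-, h⟩ | ⟨-, h⟩) <;>
      first
      | (rw [pathGraph_adj] at h; simp only [Fin.val_mk] at h; omega)
      | (exact Or.inl (congrArg Fin.val h))
      | (exact Or.inl (congrArg Fin.val h.symm))

lemma dom_count {m n : ℕ} (hm : 1 ≤ m) (D : Finset (Fin m × Fin n))
    (hdom : ((⊤ : SimpleGraph (Fin m)) ⊠ pathGraph n).IsDominatingSet ↑D)
    (a b : ℕ) (hb : b ≤ n) (P : Fin m × Fin n → Prop) [DecidablePred P]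
    (hP : ∀ d ∈ D, ∀ c : ℕ, a ≤ c → c < b →
      ((d.2 : ℕ) = c ∨ (d.2 : ℕ) + 1 = c ∨ c + 1 = (d.2 : ℕ)) → P d) :
    b - a ≤ 3 * (D.filter P).card := by
  rcases le_or_gt b a with h | h
  · omega
  have hn0 : 0 < n := lt_of_lt_of_le (lt_of_le_of_lt (Nat.zero_le a) h) hb
  classical
  set g : ℕ → Fin m × Fin n := fun c =>
    if hc : c < n then Classical.choose (near_dominator hm D hdom c hc)
    else (⟨0, hm⟩, ⟨0, hn0⟩) with hg
  have hgspec : ∀ c : ℕ, c < n → g c ∈ D ∧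
      (((g c).2 : ℕ) = c ∨ ((g c).2 : ℕ) + 1 = c ∨ c + 1 = ((g c).2 : ℕ)) := by
    intro c hc
    simp only [hg, dif_pos hc]
    obtain ⟨hd, hrel⟩ := Classical.choose_spec (near_dominator hm D hdom c hc)
    exact ⟨hd, hrel⟩
  have himg : (Finset.Ico a b).image g ⊆ D.filter P := by
    intro d hd
    simp only [Finset.mem_image, Finset.mem_Ico] at hd
    obtain ⟨c, ⟨hac, hcb⟩, rfl⟩ := hd
    have hc : c < n := lt_of_lt_of_le hcb hb
    obtain ⟨hmem, hrel⟩ := hgspec c hc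
    exact Finset.mem_filter.2 ⟨hmem, hP _ hmem c hac hcb hrel⟩
  have hfib := Finset.card_le_mul_card_image (f := g) (Finset.Ico a b) 3 ?_
  · calc b - a = (Finset.Ico a b).card := (Nat.card_Ico a b).symm
      _ ≤ 3 * ((Finset.Ico a b).image g).card := hfib
      _ ≤ 3 * (D.filter P).card := by
          exact Nat.mul_le_mul_left 3 (Finset.card_le_card himg)
  · intro d hd
    have hsub : (Finset.Ico a b).filter (fun x => g x = d) ⊆
        Finset.Ico ((d.2 : ℕ) - 1) ((d.2 : ℕ) + 2) := by
      intro c hc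
      simp only [Finset.mem_filter, Finset.mem_Ico] at hc ⊢
      obtain ⟨⟨hac, hcb⟩, hgc⟩ := hc
      have hcn : c < n := lt_of_lt_of_le hcb hb
      obtain ⟨-, hrel⟩ := hgspec c hcn
      rw [hgc] at hrel
      omega
    calc ((Finset.Ico a b).filter (fun x => g x = d)).card
        ≤ (Finset.Ico ((d.2 : ℕ) - 1) ((d.2 : ℕ) + 2)).card := Finset.card_le_card hsub
      _ ≤ 3 := by rw [Nat.card_Ico]; omega

/-- **Lemma.** Let `D` be a minimum dominating set of `K_m ⊠ P_n`, where the vertices of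
`P_n` are `v₁, …, vₙ` (here `vᵢ` is the element of `Fin n` with value `i - 1`).
Then `|D ∩ (V(K_m) × {v₁, …, vᵢ})| ≥ ⌈(i-1)/3⌉` for every `1 < i ≤ n`, and
`|D ∩ (V(K_m) × {v_j, …, vₙ})| ≥ ⌈(n-j)/3⌉` for every `1 ≤ j < n`. -/
theorem min_dominating_prefix_suffix_bound (m n : ℕ) (hm : 1 ≤ m) (hn : 2 ≤ n)
    (D : Finset (Fin m × Fin n))
    (hdom : ((⊤ : SimpleGraph (Fin m)) ⊠ pathGraph n).IsDominatingSet ↑D)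
    (hmin : D.card = ((⊤ : SimpleGraph (Fin m)) ⊠ pathGraph n).dominationNumber) :
    (∀ i : ℕ, 1 < i → i ≤ n →
      (i - 1 + 2) / 3 ≤ (D.filter (fun p => (p.2 : ℕ) < i)).card) ∧
    (∀ j : ℕ, 1 ≤ j → j < n →
      (n - j + 2) / 3 ≤ (D.filter (fun p => j - 1 ≤ (p.2 : ℕ))).card) := by
  constructor
  · intro i hi hin
    have key := dom_count hm D hdom 0 (i - 1) (by omega)
      (fun p => (p.2 : ℕ) < i) (by intro d hd c hac hcb hrel; omega)
    omega
  · intro j hj hjn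
    have key := dom_count hm D hdom j n le_rfl
      (fun p => j - 1 ≤ (p.2 : ℕ)) (by intro d hd c hac hcb hrel; omega)
    omega
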